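/- For every integer k ≥ 3, the map λ ↦ λ f_{k−1}(λ)/f_k(λ) from (0, ∞) to (k, ∞) is a bijection; in particular, for every real c > k there is a unique λ > 0 with λ f_{k−1}(λ)/f_k(λ) = c. -/

import Mathlib

open Real Finset

noncomputable def fTail (j : ℕ) (x : ℝ) : ℝ :=
  Real.exp x - ∑ i ∈ Finset.range j, x ^ i / (Nat.factorial i : ℝ)

/-!
Write `a_j = λ ^ j / j!`. Since `λ a_j = (j + 1) a_{j+1}`, a combination
`p λ² f_{k-2} + q λ f_{k-1} + r f_k` equals `∑_{j ≥ k} (p j (j - 1) + q j + r) a_j`, so its sign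
can be read off the quadratic weight. This gives `k f_k < λ f_{k-1}`, so the map lands in
`(k, ∞)`. For injectivity, `λ f_{k-1} / f_k = c` means that `λ ^ (-c) (λ f_{k-1} - c f_k)`
vanishes, and this function has derivative `λ ^ (-c-1) ∑_{j ≥ k} (j - c)² a_j > 0`. Surjectivity
follows from the intermediate value theorem and the bounds `λ < λ f_{k-1} / f_k ≤ λ + k`.
-/

open Nat

lemma Set.BijOn.existsUnique_mem_eq {α β : Type*} {f : α → β} {s : Set α} {t : Set β}
    (h : Set.BijOn f s t) {b : β} (hb : b ∈ t) : ∃! a, a ∈ s ∧ f a = b := by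
  obtain ⟨a, ha, rfl⟩ := h.surjOn hb
  exact ⟨a, ⟨ha, rfl⟩, fun a' ⟨ha', he⟩ => h.injOn ha' ha he⟩

lemma hasSum_fTail (j : ℕ) (x : ℝ) :
    HasSum (fun i => x ^ (i + j) / (i + j)!) (fTail j x) := by
  rw [fTail, exp_eq_exp_ℝ]
  exact (hasSum_nat_add_iff' j).2 (NormedSpace.expSeries_div_hasSum_exp x)

lemma fTail_pos (j : ℕ) {x : ℝ} (hx : 0 < x) : 0 < fTail j x :=
  hasSum_lt (fun _ => by positivity) (by positivity : (0 : ℝ) < x ^ (0 + j) / (0 + j)!)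
    hasSum_zero (hasSum_fTail j x)

lemma pow_div_factorial_le_fTail (j : ℕ) {x : ℝ} (hx : 0 < x) : x ^ j / j ! ≤ fTail j x := by
  simpa using le_hasSum (hasSum_fTail j x) 0 fun _ _ => by positivity

lemma fTail_eq_fTail_succ_add (j : ℕ) (x : ℝ) : fTail j x = fTail (j + 1) x + x ^ j / j ! := by
  simp only [fTail, sum_range_succ]
  ring

lemma fTail_succ_lt (j : ℕ) {x : ℝ} (hx : 0 < x) : fTail (j + 1) x < fTail j x := by
  rw [fTail_eq_fTail_succ_add j x]
  have : 0 < x ^ j / j ! := by positivity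
  linarith

lemma mul_pow_div_factorial (x : ℝ) (m : ℕ) :
    x * (x ^ m / m !) = (m + 1) * (x ^ (m + 1) / (m + 1)!) := by
  rw [factorial_succ, pow_succ]
  push_cast
  field_simp

lemma hasSum_quadratic_fTail (n : ℕ) (p q r x : ℝ) :
    HasSum (fun i : ℕ => (p * (i + n + 2) * (i + n + 1) + q * (i + n + 2) + r) *
        (x ^ (i + n + 2) / (i + n + 2)!))
      (p * x ^ 2 * fTail n x + q * x * fTail (n + 1) x + r * fTail (n + 2) x) := by
  have h := (((hasSum_fTail n x).mul_left (p * x ^ 2)).add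
    ((hasSum_fTail (n + 1) x).mul_left (q * x))).add ((hasSum_fTail (n + 2) x).mul_left r)
  convert h using 2 with i
  · rfl
  have h1 := mul_pow_div_factorial x (i + n)
  have h2 := mul_pow_div_factorial x (i + n + 1)
  push_cast at h1 h2 ⊢
  linear_combination (-p * x) * h1 - (p * (i + n + 1) + q) * h2

lemma quadratic_fTail_pos (n : ℕ) (p q r : ℝ) {x : ℝ} (hx : 0 < x)
    (hnonneg : ∀ i : ℕ, 0 ≤ p * (i + n + 2) * (i + n + 1) + q * (i + n + 2) + r)
    (i₀ : ℕ) (hpos : 0 < p * (i₀ + n + 2) * (i₀ + n + 1) + q * (i₀ + n + 2) + r) :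
    0 < p * x ^ 2 * fTail n x + q * x * fTail (n + 1) x + r * fTail (n + 2) x :=
  hasSum_lt (fun i => mul_nonneg (hnonneg i) (by positivity)) (mul_pos hpos (by positivity))
    hasSum_zero (hasSum_quadratic_fTail n p q r x)

lemma hasDerivAt_fTail_succ (j : ℕ) (x : ℝ) : HasDerivAt (fTail (j + 1)) (fTail j x) x := by
  induction j with
  | zero =>
    have h1 : fTail 1 = fun y => exp y - 1 := by
      funext y
      simp [fTail]
    rw [h1]
    simpa [fTail] using (hasDerivAt_exp x).sub_const 1
  | succ j ih =>
    have hpow : HasDerivAt (fun y : ℝ => y ^ (j + 1) / ((j + 1)! : ℝ)) (x ^ j / j !) x := by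
      refine ((hasDerivAt_pow (j + 1) x).div_const _).congr_deriv ?_
      rw [factorial_succ]
      push_cast
      field_simp
    have hsplit : fTail (j + 1 + 1) = fun y => fTail (j + 1) y - y ^ (j + 1) / (j + 1)! := by
      funext y
      rw [fTail_eq_fTail_succ_add (j + 1) y]
      ring
    rw [hsplit]
    refine (ih.sub hpow).congr_deriv ?_
    rw [fTail_eq_fTail_succ_add j x]
    ring

lemma continuous_fTail (j : ℕ) : Continuous (fTail j) := by
  unfold fTail
  fun_prop

noncomputable def truncPoissonMean (k : ℕ) (x : ℝ) : ℝ := x * fTail (k - 1) x / fTail k x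

section truncPoissonMean

variable (n : ℕ) {x : ℝ}

lemma truncPoissonMean_add_one :
    truncPoissonMean (n + 1) x = x * fTail n x / fTail (n + 1) x :=
  rfl

lemma natCast_add_two_lt_truncPoissonMean (hx : 0 < x) :
    (n + 2 : ℝ) < truncPoissonMean (n + 2) x := by
  have key := quadratic_fTail_pos n 0 1 (-(n + 2)) hx
    (fun i => by linarith [(i.cast_nonneg : (0 : ℝ) ≤ i)]) 1 (by norm_num)
  rw [truncPoissonMean_add_one, lt_div_iff₀ (fTail_pos _ hx)]
  linarith

lemma lt_truncPoissonMean (hx : 0 < x) : x < truncPoissonMean (n + 1) x := by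
  rw [truncPoissonMean_add_one, lt_div_iff₀ (fTail_pos _ hx)]
  exact mul_lt_mul_of_pos_left (fTail_succ_lt n hx) hx

lemma truncPoissonMean_le (hx : 0 < x) : truncPoissonMean (n + 1) x ≤ x + (n + 1) := by
  rw [truncPoissonMean_add_one, div_le_iff₀ (fTail_pos _ hx), fTail_eq_fTail_succ_add n x,
    mul_add, mul_pow_div_factorial]
  have := pow_div_factorial_le_fTail (n + 1) hx
  nlinarith

lemma continuousOn_truncPoissonMean : ContinuousOn (truncPoissonMean (n + 1)) (Set.Ioi 0) :=
  fun _ hx => (((continuous_id.mul (continuous_fTail n)).continuousAt).div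
    (continuous_fTail (n + 1)).continuousAt (fTail_pos _ hx).ne').continuousWithinAt

lemma truncPoissonMean_eq_iff (hx : 0 < x) (c : ℝ) :
    truncPoissonMean (n + 1) x = c ↔ x * fTail n x - c * fTail (n + 1) x = 0 := by
  rw [truncPoissonMean_add_one, div_eq_iff (fTail_pos _ hx).ne', sub_eq_zero]

lemma strictMonoOn_rpow_neg_mul_sub (c : ℝ) :
    StrictMonoOn (fun x => x ^ (-c) * (x * fTail (n + 1) x - c * fTail (n + 2) x))
      (Set.Ioi 0) := by
  have hderiv : ∀ x : ℝ, 0 < x → HasDerivAt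
      (fun x => x ^ (-c) * (x * fTail (n + 1) x - c * fTail (n + 2) x))
      (x ^ (-c - 1) * (1 * x ^ 2 * fTail n x + (1 - 2 * c) * x * fTail (n + 1) x +
        c ^ 2 * fTail (n + 2) x)) x := by
    intro x hx
    refine ((hasDerivAt_rpow_const (p := -c) (Or.inl hx.ne')).fun_mul
      (((hasDerivAt_id' x).fun_mul (hasDerivAt_fTail_succ n x)).fun_sub
        ((hasDerivAt_fTail_succ (n + 1) x).const_mul c))).congr_deriv ?_
    rw [show x ^ (-c) = x ^ (-c - 1) * x by rw [← rpow_add_one hx.ne']; ring_nf]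
    ring
  obtain ⟨i₀, hi₀⟩ : ∃ i₀ : ℕ, (i₀ + n + 2 : ℝ) ≠ c := by
    by_cases hc : (n + 2 : ℝ) = c
    · exact ⟨1, by rw [← hc]; push_cast; linarith⟩
    · exact ⟨0, by simpa using hc⟩
  refine strictMonoOn_of_hasDerivWithinAt_pos (convex_Ioi 0)
    (fun x hx => (hderiv x hx).continuousAt.continuousWithinAt)
    (fun x hx => (hderiv x (by simpa using hx)).hasDerivWithinAt) fun x hx => ?_
  rw [interior_Ioi] at hx
  refine mul_pos (rpow_pos_of_pos hx _) (quadratic_fTail_pos n 1 (1 - 2 * c) (c ^ 2) hx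
    (fun i => ?_) i₀ ?_)
  · nlinarith [sq_nonneg ((i : ℝ) + n + 2 - c)]
  · nlinarith [sq_pos_of_ne_zero (sub_ne_zero.2 hi₀)]

lemma mapsTo_truncPoissonMean :
    Set.MapsTo (truncPoissonMean (n + 2)) (Set.Ioi 0) (Set.Ioi (n + 2 : ℝ)) :=
  fun _ hx => natCast_add_two_lt_truncPoissonMean n hx

lemma injOn_truncPoissonMean : Set.InjOn (truncPoissonMean (n + 2)) (Set.Ioi 0) := by
  intro x hx y hy hxy
  set c := truncPoissonMean (n + 2) x
  have hx0 : x * fTail (n + 1) x - c * fTail (n + 2) x = 0 :=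
    (truncPoissonMean_eq_iff (n + 1) hx c).1 rfl
  have hy0 : y * fTail (n + 1) y - c * fTail (n + 2) y = 0 :=
    (truncPoissonMean_eq_iff (n + 1) hy c).1 hxy.symm
  refine (strictMonoOn_rpow_neg_mul_sub n c).injOn hx hy ?_
  rw [hx0, hy0, mul_zero, mul_zero]

lemma surjOn_truncPoissonMean :
    Set.SurjOn (truncPoissonMean (n + 1)) (Set.Ioi 0) (Set.Ioi (n + 1 : ℝ)) := by
  intro c hc
  rw [Set.mem_Ioi] at hc
  set a := (c - (n + 1)) / 2 with ha
  have ha0 : 0 < a := by linarith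
  have hfa : truncPoissonMean (n + 1) a ≤ c := by linarith [truncPoissonMean_le n ha0]
  have hfc : c ≤ truncPoissonMean (n + 1) c := (lt_truncPoissonMean n (by linarith)).le
  have hcont : ContinuousOn (truncPoissonMean (n + 1)) (Set.Icc a c) :=
    (continuousOn_truncPoissonMean n).mono fun y hy => lt_of_lt_of_le ha0 hy.1
  obtain ⟨x, hx, hxc⟩ := intermediate_value_Icc (by linarith) hcont ⟨hfa, hfc⟩
  exact ⟨x, lt_of_lt_of_le ha0 hx.1, hxc⟩

end truncPoissonMean

lemma bijOn_truncPoissonMean (k : ℕ) (hk : 2 ≤ k) :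
    Set.BijOn (truncPoissonMean k) (Set.Ioi 0) (Set.Ioi (k : ℝ)) := by
  obtain ⟨n, rfl⟩ : ∃ n, k = n + 2 := ⟨k - 2, by omega⟩
  push_cast
  exact ⟨mapsTo_truncPoissonMean n, injOn_truncPoissonMean n,
    by exact_mod_cast surjOn_truncPoissonMean (n + 1)⟩

/-- for `k ≥ 3`, `λ ↦ λ f_{k-1}(λ)/f_k(λ)` is a bijection from `(0,∞)`
onto `(k,∞)`; in particular for every `c > k` there is a unique `λ > 0` with
`λ f_{k-1}(λ)/f_k(λ) = c`. -/
theorem mean_map_bijOn (k : ℕ) (hk : 3 ≤ k) :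
    Set.BijOn (fun lam : ℝ => lam * fTail (k - 1) lam / fTail k lam)
      (Set.Ioi 0) (Set.Ioi (k : ℝ)) ∧
    ∀ c : ℝ, (k : ℝ) < c →
      ∃! lam : ℝ, 0 < lam ∧ lam * fTail (k - 1) lam / fTail k lam = c := by
  have h := bijOn_truncPoissonMean k (by omega)
  exact ⟨h, fun c hc => h.existsUnique_mem_eq hc⟩
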